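/- arXiv:1702.01689 — 3 statements merged into one kernel-verified Lean document; each statement's English description precedes it below -/
import Mathlib

section
/- Let ν be a finite Borel measure on a metric space, t > 0, and suppose that for ν-almost every x, liminf_{r→0} log ν(B(x,r))/log r > t. Then there exists an increasing sequence of Borel sets (A_k) with ν(⋃_k A_k) = ν(X) such that the restricted measures ν|_{A_k} have finite t-energy: ∬ d(x,y)^{-t} dν|_{A_k}(x) dν|_{A_k}(y) < ∞. -/
open MeasureTheory Filter Topology Metric
open scoped ENNReal

/-!
The sets are the sublevel sets `{x | ∫ d(x,y)^(-t) dν(y) ≤ k}` of the `t`-potential of `ν`. By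
Fatou's lemma the potential is lower semicontinuous, hence Borel, and the `t`-energy of `ν`
restricted to the `k`-th set is at most `k ν(X)`. The sets exhaust `ν`-almost all of `X`: lower
local dimension `> t` at `x` gives `ν(B(x,r)) ≤ r^s` for some `s > t` and all small `r`, and
cutting `X` into dyadic annuli around `x` bounds the potential at `x` by a convergent geometric
series.
-/

theorem lowerSemicontinuous_lintegral {Y α : Type*} [TopologicalSpace Y]
    [FirstCountableTopology Y] [MeasurableSpace α] (μ : Measure α) {f : Y → α → ℝ≥0∞}
    (hf : ∀ a, LowerSemicontinuous fun y => f y a) (hmeas : ∀ y, Measurable (f y)) :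
    LowerSemicontinuous fun y => ∫⁻ a, f y a ∂μ :=
  lowerSemicontinuous_iff_le_liminf.2 fun y =>
    (lintegral_mono fun a => (hf a).le_liminf y).trans (lintegral_liminf_le hmeas)

-- `0 ≤ b` rules out the junk value `liminf u f = sSup ∅ = 0`.
theorem exists_lt_eventually_le_of_lt_liminf {α : Type*} {f : Filter α} {u : α → ℝ} {b : ℝ}
    (hb : 0 ≤ b) (h : b < liminf u f) : ∃ b' > b, ∀ᶠ a in f, b' ≤ u a := by
  rw [liminf_eq] at h
  have hne : {a | ∀ᶠ n in f, a ≤ u n}.Nonempty := by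
    by_contra hemp
    rw [Set.not_nonempty_iff_eq_empty.1 hemp, Real.sSup_empty] at h
    exact h.not_ge hb
  obtain ⟨b', hb', hbb'⟩ := exists_lt_of_lt_csSup hne h
  exact ⟨b', hbb', hb'⟩

theorem Real.le_rpow_of_le_log_div_log {m r s : ℝ} (hm : 0 ≤ m) (hr₀ : 0 < r) (hr₁ : r < 1)
    (h : s ≤ Real.log m / Real.log r) : m ≤ r ^ s := by
  rcases hm.eq_or_lt with rfl | hm
  · positivity
  rw [Real.le_rpow_iff_log_le hm hr₀]
  exact (le_div_iff_of_neg (Real.log_neg hr₀ hr₁)).1 h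

theorem summable_rpow_neg_mul_rpow_dyadic {ρ t s : ℝ} (hρ : 0 < ρ) (hts : t < s) :
    Summable fun n : ℕ => (ρ / 2 ^ n / 2) ^ (-t) * (2 * (ρ / 2 ^ n)) ^ s := by
  have hq : (2 ^ (s - t) : ℝ)⁻¹ < 1 :=
    inv_lt_one_of_one_lt₀ (Real.one_lt_rpow one_lt_two (sub_pos.2 hts))
  refine ((summable_geometric_of_lt_one (by positivity) hq).mul_left
    (2 ^ t * 2 ^ s * ρ ^ (s - t))).congr fun n => ?_
  have hr : 0 < ρ / 2 ^ n := by positivity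
  have hscale : (ρ / 2 ^ n / 2) ^ (-t) * (2 * (ρ / 2 ^ n)) ^ s =
      2 ^ t * 2 ^ s * (ρ / 2 ^ n) ^ (s - t) := by
    rw [Real.div_rpow hr.le zero_le_two, Real.mul_rpow zero_le_two hr.le,
      Real.rpow_neg zero_le_two, Real.rpow_neg hr.le, Real.rpow_sub hr]
    field_simp
  rw [hscale, Real.div_rpow hρ.le (by positivity), ← Real.rpow_pow_comm zero_le_two, inv_pow]
  ring

section Potential

variable {X : Type*} [PseudoMetricSpace X]

theorem edist_rpow_neg_eq_ofReal {x y : X} (h : 0 < dist x y) (t : ℝ) :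
    edist x y ^ (-t) = ENNReal.ofReal (dist x y ^ (-t)) := by
  rw [edist_dist, ENNReal.ofReal_rpow_of_pos h]

theorem edist_rpow_neg_le_add_tsum_indicator {t ρ : ℝ} (ht : 0 < t) (hρ : 0 < ρ) (x y : X) :
    edist x y ^ (-t) ≤ ENNReal.ofReal (ρ ^ (-t)) +
      ∑' n : ℕ, (closedBall x (ρ / 2 ^ n)).indicator
        (fun _ => ENNReal.ofReal ((ρ / 2 ^ n / 2) ^ (-t))) y := by
  have hmem : ∀ n : ℕ, dist x y ≤ ρ / 2 ^ n → (closedBall x (ρ / 2 ^ n)).indicator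
      (fun _ => ENNReal.ofReal ((ρ / 2 ^ n / 2) ^ (-t))) y =
        ENNReal.ofReal ((ρ / 2 ^ n / 2) ^ (-t)) :=
    fun n hn => Set.indicator_of_mem (mem_closedBall'.2 hn) _
  have hneg : -t ≤ 0 := neg_nonpos.2 ht.le
  rcases (dist_nonneg : 0 ≤ dist x y).eq_or_lt with hd | hd
  · -- every dyadic ball contains `y`, and the coefficients are at least `(ρ / 2) ^ (-t)`
    rw [edist_dist, ← hd, ENNReal.ofReal_zero, ENNReal.zero_rpow_of_neg (neg_neg_of_pos ht),
      top_le_iff]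
    have hpos : ENNReal.ofReal ((ρ / 2) ^ (-t)) ≠ 0 := (ENNReal.ofReal_pos.2 (by positivity)).ne'
    refine eq_top_mono (le_add_left (ENNReal.tsum_le_tsum fun n => ?_))
      (ENNReal.tsum_const_eq_top_of_ne_zero hpos)
    rw [hmem n (hd ▸ by positivity)]
    refine ENNReal.ofReal_le_ofReal (Real.rpow_le_rpow_of_nonpos (by positivity) ?_ hneg)
    gcongr
    exact div_le_self hρ.le (one_le_pow₀ one_le_two)
  rcases le_or_gt (dist x y) ρ with hnear | hfar
  · obtain ⟨n, hn, hn'⟩ := exists_nat_pow_near ((one_le_div hd).2 hnear) one_lt_two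
    rw [le_div_iff₀ hd, ← le_div_iff₀' (by positivity)] at hn
    rw [div_lt_iff₀ hd, pow_succ, ← div_lt_iff₀' (by positivity), ← div_div] at hn'
    refine le_add_left (le_trans ?_ (ENNReal.le_tsum n))
    rw [hmem n hn, edist_rpow_neg_eq_ofReal hd]
    exact ENNReal.ofReal_le_ofReal (Real.rpow_le_rpow_of_nonpos (by positivity) hn'.le hneg)
  · refine le_add_right ?_
    rw [edist_rpow_neg_eq_ofReal hd]
    exact ENNReal.ofReal_le_ofReal (Real.rpow_le_rpow_of_nonpos hρ hfar.le hneg)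

variable [MeasurableSpace X]

noncomputable def rieszPotential (ν : Measure X) (t : ℝ) (x : X) : ℝ≥0∞ :=
  ∫⁻ y, edist x y ^ (-t) ∂ν

noncomputable def rieszEnergy (ν : Measure X) (t : ℝ) : ℝ≥0∞ :=
  ∫⁻ x, ∫⁻ y, edist x y ^ (-t) ∂ν ∂ν

theorem rieszPotential_lt_top [OpensMeasurableSpace X] (ν : Measure X) [IsFiniteMeasure ν]
    {t s : ℝ} (ht : 0 < t) (hts : t < s) {x : X}
    (hball : ∀ᶠ r in 𝓝[>] (0 : ℝ), ν (ball x r) ≤ ENNReal.ofReal (r ^ s)) :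
    rieszPotential ν t x < ⊤ := by
  obtain ⟨ε, hε : 0 < ε, hεball⟩ := mem_nhdsGT_iff_exists_Ioo_subset.1 hball
  set ρ := ε / 4 with hρ_def
  have hρ : 0 < ρ := by positivity
  have hclosedBall (n : ℕ) :
      ν (closedBall x (ρ / 2 ^ n)) ≤ ENNReal.ofReal ((2 * (ρ / 2 ^ n)) ^ s) := by
    have hr : 0 < ρ / 2 ^ n := by positivity
    have hrε : 2 * (ρ / 2 ^ n) < ε := by
      have : ρ / 2 ^ n ≤ ρ := div_le_self hρ.le (one_le_pow₀ one_le_two)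
      linarith
    exact (measure_mono (closedBall_subset_ball (by linarith))).trans
      (hεball ⟨by positivity, hrε⟩)
  calc rieszPotential ν t x
      ≤ ∫⁻ y, (ENNReal.ofReal (ρ ^ (-t)) + ∑' n : ℕ,
          (closedBall x (ρ / 2 ^ n)).indicator
            (fun _ => ENNReal.ofReal ((ρ / 2 ^ n / 2) ^ (-t))) y) ∂ν :=
        lintegral_mono (edist_rpow_neg_le_add_tsum_indicator ht hρ x)
    _ = ENNReal.ofReal (ρ ^ (-t)) * ν Set.univ + ∑' n : ℕ,
          ENNReal.ofReal ((ρ / 2 ^ n / 2) ^ (-t)) * ν (closedBall x (ρ / 2 ^ n)) := by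
        rw [lintegral_add_left measurable_const, lintegral_const, lintegral_tsum fun n =>
          (measurable_const.indicator measurableSet_closedBall).aemeasurable]
        simp only [lintegral_indicator_const measurableSet_closedBall]
    _ ≤ ENNReal.ofReal (ρ ^ (-t)) * ν Set.univ + ∑' n : ℕ,
          ENNReal.ofReal ((ρ / 2 ^ n / 2) ^ (-t) * (2 * (ρ / 2 ^ n)) ^ s) := by
        gcongr with n
        rw [ENNReal.ofReal_mul (by positivity)]
        gcongr
        exact hclosedBall n
    _ < ⊤ := by
        rw [← ENNReal.ofReal_tsum_of_nonneg (fun n => by positivity)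
          (summable_rpow_neg_mul_rpow_dyadic hρ hts)]
        exact ENNReal.add_lt_top.2 ⟨ENNReal.mul_lt_top ENNReal.ofReal_lt_top
          (measure_lt_top ν _), ENNReal.ofReal_lt_top⟩

theorem measurable_rieszPotential [OpensMeasurableSpace X] (ν : Measure X) (t : ℝ) :
    Measurable (rieszPotential ν t) := by
  have hcont : ∀ y : X, Continuous fun x : X => edist x y ^ (-t) := fun y =>
    ENNReal.continuous_rpow_const.comp (continuous_id.edist continuous_const)
  refine (lowerSemicontinuous_lintegral ν (fun y => (hcont y).lowerSemicontinuous)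
    fun x => ?_).measurable
  simp only [edist_comm x]
  exact (hcont x).measurable

theorem rieszEnergy_restrict_le (ν : Measure X) (t : ℝ) {A : Set X} (hA : MeasurableSet A)
    {M : ℝ≥0∞} (hM : ∀ x ∈ A, rieszPotential ν t x ≤ M) :
    rieszEnergy (ν.restrict A) t ≤ M * ν A :=
  calc rieszEnergy (ν.restrict A) t
      ≤ ∫⁻ x in A, rieszPotential ν t x ∂ν :=
        lintegral_mono fun _ => lintegral_mono' Measure.restrict_le_self le_rfl
    _ ≤ ∫⁻ _ in A, M ∂ν := setLIntegral_mono' hA hM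
    _ = M * ν A := setLIntegral_const A M

theorem exists_measure_ball_le_rpow_of_lt_liminf (ν : Measure X) [IsFiniteMeasure ν] {t : ℝ}
    (ht : 0 ≤ t) {x : X}
    (hx : t < liminf (fun r : ℝ => Real.log (ν (ball x r)).toReal / Real.log r) (𝓝[>] 0)) :
    ∃ s > t, ∀ᶠ r in 𝓝[>] (0 : ℝ), ν (ball x r) ≤ ENNReal.ofReal (r ^ s) := by
  obtain ⟨s, hts, hs⟩ := exists_lt_eventually_le_of_lt_liminf ht hx
  refine ⟨s, hts, ?_⟩
  filter_upwards [hs, Ioo_mem_nhdsGT one_pos] with r hr hr₀₁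
  rw [← ENNReal.ofReal_toReal (measure_ne_top ν _)]
  exact ENNReal.ofReal_le_ofReal
    (Real.le_rpow_of_le_log_div_log ENNReal.toReal_nonneg hr₀₁.1 hr₀₁.2 hr)

end Potential

/-- If `ν` is a finite Borel measure whose lower local dimension is `> t` almost
everywhere, then there is an increasing sequence of Borel sets `A k` covering
almost all the space on which the restricted measures have finite `t`-energy. -/
theorem exists_increasing_sets_finite_energy
    {X : Type*} [MetricSpace X] [MeasurableSpace X] [BorelSpace X]
    (ν : Measure X) [IsFiniteMeasure ν] (t : ℝ) (ht : 0 < t)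
    (hdim : ∀ᵐ x ∂ν, t <
      Filter.liminf (fun r : ℝ => Real.log (ν (ball x r)).toReal / Real.log r)
        (𝓝[>] (0:ℝ))) :
    ∃ A : ℕ → Set X, Monotone A ∧ (∀ k, MeasurableSet (A k)) ∧
      ν (⋃ k, A k) = ν Set.univ ∧
      ∀ k, (∫⁻ x, ∫⁻ y, (edist x y) ^ (-t) ∂(ν.restrict (A k)) ∂(ν.restrict (A k))) < ⊤ := by
  have hA : ∀ k : ℕ, MeasurableSet {x | rieszPotential ν t x ≤ k} := fun k =>
    measurableSet_le (measurable_rieszPotential ν t) measurable_const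
  have hmono : Monotone fun k : ℕ => {x | rieszPotential ν t x ≤ k} := fun _ _ hjk =>
    Set.ofPred_subset_ofPred.2 fun _ hx => hx.trans (Nat.cast_le.2 hjk)
  refine ⟨fun k => {x | rieszPotential ν t x ≤ k}, hmono, hA,
    measure_congr (eventuallyEq_univ.2 ?_), fun k => ?_⟩
  · filter_upwards [hdim] with x hx
    obtain ⟨s, hts, hs⟩ := exists_measure_ball_le_rpow_of_lt_liminf ν ht.le hx
    obtain ⟨k, hk⟩ := ENNReal.exists_nat_gt (rieszPotential_lt_top ν ht hts hs).ne
    exact Set.mem_iUnion.2 ⟨k, hk.le⟩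
  · exact (rieszEnergy_restrict_le ν t (hA k) fun _ hx => hx).trans_lt
      (ENNReal.mul_lt_top (ENNReal.natCast_lt_top k) (measure_lt_top ν _))
end

section
/- Let T preserve an ergodic probability measure μ, and let d : X → [0,∞) be measurable with |d∘T − d| ≤ 1 pointwise. Then ∫ (d∘T − d) dμ = 0, and consequently d(Tⁿx)/n → 0 for μ-a.e. x. -/
/-! The coboundary `g = d ∘ T - d` is bounded and its Birkhoff sums telescope to
`d (Tⁿ x) - d x`. Birkhoff's ergodic theorem (for ergodic `T`, via Garsia's maximal inequality)
gives `d (Tⁿ x) / n → ∫ g` almost everywhere. The limit is `≥ 0` since `d ≥ 0`, and `≤ 0`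
since by Poincaré recurrence almost every orbit returns infinitely often to a sublevel set
`{d ≤ m}`. -/

open MeasureTheory Filter Topology Set

section BirkhoffSum

variable {X : Type*} {T : X → X} {f : X → ℝ}

/-- `maxBirkhoffSum T f n x = max_{0 ≤ k ≤ n} birkhoffSum T f k x`, written through the recursion
`Mₙ₊₁ = max 0 (f + Mₙ ∘ T)` inherited from `Sₖ₊₁ x = f x + Sₖ (T x)`. -/
noncomputable def maxBirkhoffSum (T : X → X) (f : X → ℝ) : ℕ → X → ℝ
  | 0 => 0
  | n + 1 => fun x => max 0 (f x + maxBirkhoffSum T f n (T x))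

lemma maxBirkhoffSum_nonneg (n : ℕ) (x : X) : 0 ≤ maxBirkhoffSum T f n x := by
  cases n
  · exact le_rfl
  · exact le_max_left _ _

lemma maxBirkhoffSum_le_succ (n : ℕ) (x : X) :
    maxBirkhoffSum T f n x ≤ maxBirkhoffSum T f (n + 1) x := by
  induction n generalizing x with
  | zero => exact le_max_left _ _
  | succ n ih => exact max_le_max le_rfl (add_le_add le_rfl (ih (T x)))

lemma monotone_maxBirkhoffSum (x : X) : Monotone fun n => maxBirkhoffSum T f n x :=
  monotone_nat_of_le_succ fun n => maxBirkhoffSum_le_succ n x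

lemma birkhoffSum_le_maxBirkhoffSum (n : ℕ) (x : X) :
    birkhoffSum T f n x ≤ maxBirkhoffSum T f n x := by
  induction n generalizing x with
  | zero => simp [maxBirkhoffSum, birkhoffSum_zero]
  | succ n ih =>
    rw [birkhoffSum_succ']
    exact (add_le_add le_rfl (ih (T x))).trans (le_max_right _ _)

lemma maxBirkhoffSum_le_add_comp {n : ℕ} {x : X} (hx : 0 < maxBirkhoffSum T f n x) :
    maxBirkhoffSum T f n x ≤ f x + maxBirkhoffSum T f n (T x) := by
  cases n with
  | zero => exact absurd hx (lt_irrefl 0)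
  | succ n =>
    have hpos : 0 < f x + maxBirkhoffSum T f n (T x) := by
      simpa [maxBirkhoffSum] using hx
    calc maxBirkhoffSum T f (n + 1) x = f x + maxBirkhoffSum T f n (T x) := max_eq_right hpos.le
      _ ≤ f x + maxBirkhoffSum T f (n + 1) (T x) :=
        add_le_add le_rfl (maxBirkhoffSum_le_succ n (T x))

lemma bddAbove_range_birkhoffSum_apply_iff (x : X) :
    BddAbove (range fun n => birkhoffSum T f n (T x)) ↔
      BddAbove (range fun n => birkhoffSum T f n x) := by
  simp only [bddAbove_def, forall_mem_range]
  constructor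
  · rintro ⟨C, hC⟩
    refine ⟨max 0 (f x + C), fun n => ?_⟩
    cases n with
    | zero => simp [birkhoffSum_zero]
    | succ n =>
      rw [birkhoffSum_succ']
      exact (add_le_add le_rfl (hC n)).trans (le_max_right _ _)
  · rintro ⟨C, hC⟩
    refine ⟨C - f x, fun n => ?_⟩
    have := hC (n + 1)
    rw [birkhoffSum_succ'] at this
    linarith

lemma birkhoffSum_comp_sub (T : X → X) (d : X → ℝ) (n : ℕ) (x : X) :
    birkhoffSum T (fun y => d (T y) - d y) n x = d (T^[n] x) - d x := by
  induction n with
  | zero => simp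
  | succ n ih =>
    rw [birkhoffSum_succ, ih, Function.iterate_succ_apply']
    ring

end BirkhoffSum

section BirkhoffErgodic

variable {X : Type*} [MeasurableSpace X] {μ : Measure X} {T : X → X} {f : X → ℝ}

lemma measurable_birkhoffSum (hT : Measurable T) (hf : Measurable f) (n : ℕ) :
    Measurable (birkhoffSum T f n) :=
  Finset.measurable_sum _ fun k _ => hf.comp (hT.iterate k)

lemma measurable_maxBirkhoffSum (hT : Measurable T) (hf : Measurable f) (n : ℕ) :
    Measurable (maxBirkhoffSum T f n) := by
  induction n with
  | zero => exact measurable_const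
  | succ n ih => exact measurable_const.max (hf.add (ih.comp hT))

lemma integrable_maxBirkhoffSum (hT : MeasurePreserving T μ μ) (hf : Integrable f μ) (n : ℕ) :
    Integrable (maxBirkhoffSum T f n) μ := by
  induction n with
  | zero => exact integrable_zero _ _ _
  | succ n ih => exact (integrable_zero _ _ _).sup (hf.add (hT.integrable_comp_of_integrable ih))

theorem setIntegral_maxBirkhoffSum_pos_nonneg (hT : MeasurePreserving T μ μ) (hfm : Measurable f)
    (hf : Integrable f μ) (n : ℕ) :
    0 ≤ ∫ x in {x | 0 < maxBirkhoffSum T f n x}, f x ∂μ := by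
  set M := maxBirkhoffSum T f n
  set E := {x | 0 < M x}
  have hM : Integrable M μ := integrable_maxBirkhoffSum hT hf n
  have hMT : Integrable (fun x => M (T x)) μ := hT.integrable_comp_of_integrable hM
  have hMm : Measurable M := measurable_maxBirkhoffSum hT.measurable hfm n
  have hE : MeasurableSet E := measurableSet_lt measurable_const hMm
  have hinv : ∫ x, M (T x) ∂μ = ∫ x, M x ∂μ := by
    rw [← integral_map hT.measurable.aemeasurable hMm.aestronglyMeasurable, hT.map_eq]
  have : ∫ x, M x ∂μ ≤ ∫ x in E, f x ∂μ + ∫ x, M (T x) ∂μ := calc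
    ∫ x, M x ∂μ = ∫ x in E, M x ∂μ :=
      (setIntegral_eq_integral_of_forall_compl_eq_zero fun x hx =>
        le_antisymm (not_lt.1 hx) (maxBirkhoffSum_nonneg n x)).symm
    _ ≤ ∫ x in E, (f x + M (T x)) ∂μ :=
      setIntegral_mono_on hM.integrableOn (hf.add hMT).integrableOn hE
        fun x hx => maxBirkhoffSum_le_add_comp hx
    _ = ∫ x in E, f x ∂μ + ∫ x in E, M (T x) ∂μ := integral_add hf.integrableOn hMT.integrableOn
    _ ≤ ∫ x in E, f x ∂μ + ∫ x, M (T x) ∂μ :=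
      add_le_add le_rfl (setIntegral_le_integral hMT
        (.of_forall fun x => maxBirkhoffSum_nonneg n (T x)))
  linarith

theorem integral_nonneg_of_ae_exists_birkhoffSum_pos (hT : MeasurePreserving T μ μ)
    (hfm : Measurable f) (hf : Integrable f μ) (h : ∀ᵐ x ∂μ, ∃ n, 0 < birkhoffSum T f n x) :
    0 ≤ ∫ x, f x ∂μ := by
  set E : ℕ → Set X := fun n => {x | 0 < maxBirkhoffSum T f n x}
  have hE (n : ℕ) : MeasurableSet (E n) :=
    measurableSet_lt measurable_const (measurable_maxBirkhoffSum hT.measurable hfm n)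
  have hmono : Monotone E := fun m n hmn x hx => hx.trans_le (monotone_maxBirkhoffSum x hmn)
  have hU : ∀ᵐ x ∂μ, x ∈ ⋃ n, E n := h.mono fun x ⟨n, hn⟩ =>
    mem_iUnion.2 ⟨n, hn.trans_le (birkhoffSum_le_maxBirkhoffSum n x)⟩
  have hlim := tendsto_setIntegral_of_monotone hE hmono hf.integrableOn
  rw [Measure.restrict_eq_self_of_ae_mem hU] at hlim
  exact ge_of_tendsto' hlim fun n => setIntegral_maxBirkhoffSum_pos_nonneg hT hfm hf n

theorem Ergodic.ae_bddAbove_range_birkhoffSum (hT : Ergodic T μ) (hfm : Measurable f)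
    (hf : Integrable f μ) (hneg : ∫ x, f x ∂μ < 0) :
    ∀ᵐ x ∂μ, BddAbove (range fun n => birkhoffSum T f n x) := by
  have hB : MeasurableSet {x | BddAbove (range fun n => birkhoffSum T f n x)} :=
    measurableSet_bddAbove_range (measurable_birkhoffSum hT.measurable hfm)
  have hinv : T ⁻¹' {x | BddAbove (range fun n => birkhoffSum T f n x)} =
      {x | BddAbove (range fun n => birkhoffSum T f n x)} :=
    ext bddAbove_range_birkhoffSum_apply_iff
  refine (hT.ae_mem_or_ae_notMem hB hinv).resolve_right fun hunbdd => hneg.not_ge ?_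
  refine integral_nonneg_of_ae_exists_birkhoffSum_pos hT.toMeasurePreserving hfm hf
    (hunbdd.mono fun x hx => ?_)
  obtain ⟨_, ⟨n, rfl⟩, hn⟩ := not_bddAbove_iff.1 hx 0
  exact ⟨n, hn⟩

variable [IsProbabilityMeasure μ]

theorem Ergodic.ae_eventually_birkhoffAverage_lt (hT : Ergodic T μ) (hfm : Measurable f)
    (hf : Integrable f μ) {a : ℝ} (ha : ∫ x, f x ∂μ < a) :
    ∀ᵐ x ∂μ, ∀ᶠ n in atTop, birkhoffAverage ℝ T f n x < a := by
  obtain ⟨b, hfb, hba⟩ := exists_between ha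
  have hneg : ∫ x, (f x - b) ∂μ < 0 := by
    rw [integral_sub hf (integrable_const b), integral_const, probReal_univ, one_smul]
    linarith
  filter_upwards [hT.ae_bddAbove_range_birkhoffSum (hfm.sub measurable_const)
    (hf.sub (integrable_const b)) hneg] with x ⟨C, hC⟩
  have hsmall : ∀ᶠ n : ℕ in atTop, C / n < a - b :=
    (tendsto_const_div_atTop_nhds_zero_nat C).eventually (gt_mem_nhds (by linarith))
  filter_upwards [hsmall, eventually_gt_atTop 0] with n hn hn0
  have hn' : (0 : ℝ) < n := by exact_mod_cast hn0
  have hS : birkhoffSum T f n x - n * b ≤ C := by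
    have := hC ⟨n, rfl⟩
    simpa [birkhoffSum, Finset.sum_sub_distrib] using this
  rw [div_lt_iff₀ hn'] at hn
  rw [birkhoffAverage, smul_eq_mul, inv_mul_lt_iff₀ hn']
  linarith

theorem Ergodic.ae_tendsto_birkhoffAverage (hT : Ergodic T μ) (hfm : Measurable f)
    (hf : Integrable f μ) :
    ∀ᵐ x ∂μ, Tendsto (birkhoffAverage ℝ T f · x) atTop (𝓝 (∫ x, f x ∂μ)) := by
  -- rational thresholds keep the almost-everywhere quantifier countable
  have hupper := ae_all_iff.2 fun q : {q : ℚ // ∫ x, f x ∂μ < q} =>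
    hT.ae_eventually_birkhoffAverage_lt hfm hf q.2
  have hlower := ae_all_iff.2 fun q : {q : ℚ // (q : ℝ) < ∫ x, f x ∂μ} =>
    hT.ae_eventually_birkhoffAverage_lt hfm.neg hf.neg
      (a := -q) (by simpa only [Pi.neg_apply, integral_neg] using neg_lt_neg q.2)
  filter_upwards [hupper, hlower] with x hu hl
  refine tendsto_order.2 ⟨fun a ha => ?_, fun a ha => ?_⟩
  · obtain ⟨q, haq, hq⟩ := exists_rat_btwn ha
    refine (hl ⟨q, hq⟩).mono fun n hn => haq.trans ?_
    rw [birkhoffAverage_neg] at hn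
    exact neg_lt_neg_iff.1 hn
  · obtain ⟨q, hq, hqa⟩ := exists_rat_btwn ha
    exact (hu ⟨q, hq⟩).mono fun n hn => hn.trans hqa

end BirkhoffErgodic

section Recurrence

variable {X : Type*} [MeasurableSpace X] {μ : Measure X} {T : X → X} {d : X → ℝ}

theorem MeasureTheory.Conservative.ae_frequently_iterate_le (hT : Conservative T μ)
    (hd : Measurable d) :
    ∀ᵐ x ∂μ, ∃ C : ℝ, ∃ᶠ n in atTop, d (T^[n] x) ≤ C := by
  have hrec := ae_all_iff.2 fun m : ℕ => hT.ae_mem_imp_frequently_image_mem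
    (measurableSet_le hd measurable_const : MeasurableSet {x | d x ≤ (m : ℝ)}).nullMeasurableSet
  filter_upwards [hrec] with x hx
  exact ⟨_, hx ⌈d x⌉₊ (Nat.le_ceil _)⟩

theorem MeasureTheory.Conservative.nonpos_of_ae_tendsto_iterate_div [NeZero μ]
    (hT : Conservative T μ) (hd : Measurable d) {c : ℝ}
    (h : ∀ᵐ x ∂μ, Tendsto (fun n => d (T^[n] x) / n) atTop (𝓝 c)) :
    c ≤ 0 := by
  obtain ⟨x, hx, C, hC⟩ := (h.and (hT.ae_frequently_iterate_le hd)).exists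
  have hlim : Tendsto (fun n : ℕ => d (T^[n] x) / n - C / n) atTop (𝓝 c) := by
    simpa using hx.sub (tendsto_const_div_atTop_nhds_zero_nat C)
  refine le_of_tendsto_of_frequently hlim (hC.mono fun n hn => ?_)
  rw [← sub_div]
  exact div_nonpos_of_nonpos_of_nonneg (sub_nonpos.2 hn) n.cast_nonneg

end Recurrence

/-- If `T` preserves an ergodic probability measure `μ` and `d ≥ 0` is measurable
with `|d∘T − d| ≤ 1` pointwise, then `∫ (d∘T − d) dμ = 0` and `d(Tⁿx)/n → 0`
for `μ`-a.e. `x`. -/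
theorem integral_coboundary_zero_and_sublinear_growth
    {X : Type*} [MeasurableSpace X] (μ : Measure X) [IsProbabilityMeasure μ]
    (T : X → X) (hT : Ergodic T μ)
    (d : X → ℝ) (hd : Measurable d) (hd0 : ∀ x, 0 ≤ d x)
    (hlip : ∀ x, |d (T x) - d x| ≤ 1) :
    (∫ x, (d (T x) - d x) ∂μ = 0) ∧
    (∀ᵐ x ∂μ, Tendsto (fun n => d (T^[n] x) / (n : ℝ)) atTop (𝓝 0)) := by
  have hgm : Measurable fun x => d (T x) - d x := (hd.comp hT.measurable).sub hd
  have hg : Integrable (fun x => d (T x) - d x) μ :=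
    (integrable_const (1 : ℝ)).mono' hgm.aestronglyMeasurable (.of_forall hlip)
  have hlim : ∀ᵐ x ∂μ, Tendsto (fun n => d (T^[n] x) / (n : ℝ)) atTop
      (𝓝 (∫ x, (d (T x) - d x) ∂μ)) := by
    filter_upwards [hT.ae_tendsto_birkhoffAverage hgm hg] with x hx
    have hsum := hx.add (tendsto_const_div_atTop_nhds_zero_nat (d x))
    rw [add_zero] at hsum
    refine hsum.congr fun n => ?_
    rw [birkhoffAverage, birkhoffSum_comp_sub, smul_eq_mul]
    ring
  have hc : ∫ x, (d (T x) - d x) ∂μ = 0 := by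
    refine le_antisymm
      (hT.toMeasurePreserving.conservative.nonpos_of_ae_tendsto_iterate_div hd hlim) ?_
    obtain ⟨x, hx⟩ := hlim.exists
    exact ge_of_tendsto' hx fun n => div_nonneg (hd0 _) n.cast_nonneg
  exact ⟨hc, hc ▸ hlim⟩
end

section
/- Let ν₁ be a compactly supported finite Borel measure on ℝ² with finite 1-energy I₁(ν₁) = ∬ |x−y|⁻¹ dν₁(x)dν₁(y) < ∞. For θ ∈ [0, π), let π_θ denote the orthogonal projection of ℝ² onto the line ℝ·e^{i(θ+π/2)}. Then for Lebesgue-almost every θ, the projected measure (π_θ)_* ν₁ is absolutely continuous with respect to one-dimensional Lebesgue measure on the line, and the map (θ, ξ) ↦ d(π_θ)_*ν₁/dℓ_θ(ξ) belongs to L²([0,π) × ℝ) with squared L²-norm bounded by C·I₁(ν₁) for a universal constant C. -/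
open MeasureTheory Real Metric Set Filter Topology
open scoped ENNReal NNReal

/-!
For a finite measure `μ` on `ℝ` let `Dμ(ξ) = liminf μ(B(ξ, δ)) / 2δ` (along `δ = 1/(n+1)`).
Besicovitch differentiation shows that `μ ≪ λ` as soon as `Dμ < ∞` `μ`-a.e., and then
`Dμ = dμ/dλ` a.e., so `‖dμ/dλ‖₂² = ∫ Dμ dμ`. By Fatou, `∫ Dμ dμ ≤ liminf (μ ⊗ μ){|s - t| ≤ δ} / 2δ`.

For `μ = (π_θ)_* ν` the last set is `{(x, y) : |π_θ (y - x)| ≤ δ}`. Since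
`|π_θ w| = |w| |sin (arg w - θ)|`, Jordan's inequality puts the directions `θ ∈ [0, π)` with
`|π_θ w| ≤ δ` in four intervals of total length `4πδ / |w|`. Tonelli and a second use of Fatou
(in `θ`) then bound `∫ ‖d(π_θ)_*ν/dλ‖₂² dθ` by `2π I₁(ν)`, and finiteness of `I₁(ν)` makes
`∫ D(π_θ)_*ν d(π_θ)_*ν` finite for a.e. `θ`.
-/

lemma lintegral_rnDeriv_sq {α : Type*} [MeasurableSpace α] {μ ν : Measure α}
    [μ.HaveLebesgueDecomposition ν] (h : μ ≪ ν) :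
    ∫⁻ x, μ.rnDeriv ν x ^ 2 ∂ν = ∫⁻ x, μ.rnDeriv ν x ∂μ := by
  simp_rw [sq]
  exact lintegral_rnDeriv_mul h (Measure.measurable_rnDeriv μ ν).aemeasurable

section LowerDensity

variable {β : Type*} [MetricSpace β] [MeasurableSpace β]

noncomputable def lowerDensity (μ ρ : Measure β) (r : ℕ → ℝ) (x : β) : ℝ≥0∞ :=
  liminf (fun n => μ (closedBall x (r n)) / ρ (closedBall x (r n))) atTop

variable [BorelSpace β] [SecondCountableTopology β]

lemma measurable_measure_closedBall (μ : Measure β) [SFinite μ] (r : ℝ) :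
    Measurable fun x => μ (closedBall x r) :=
  measurable_measure_prodMk_left
    (isClosed_le (continuous_snd.dist continuous_fst) continuous_const).measurableSet

lemma measurable_lowerDensity (μ ρ : Measure β) [SFinite μ] [SFinite ρ] (r : ℕ → ℝ) :
    Measurable (lowerDensity μ ρ r) :=
  .liminf fun n =>
    (measurable_measure_closedBall μ (r n)).div (measurable_measure_closedBall ρ (r n))

variable [HasBesicovitchCovering β] {r : ℕ → ℝ}

theorem absolutelyContinuous_of_ae_lowerDensity_lt_top {μ ρ : Measure β} [SFinite μ]
    [IsLocallyFiniteMeasure ρ] (hr : Tendsto r atTop (𝓝[>] 0))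
    (h : ∀ᵐ x ∂μ, lowerDensity μ ρ r x < ∞) : μ ≪ ρ := by
  refine Measure.AbsolutelyContinuous.mk fun N _ hN => ?_
  have hbounded (M : ℕ) : μ (N ∩ {x | lowerDensity μ ρ r x < M}) = 0 := by
    refine le_antisymm ?_ zero_le
    calc μ (N ∩ {x | lowerDensity μ ρ r x < M})
        ≤ ((M : ℝ≥0) • ρ) (N ∩ {x | lowerDensity μ ρ r x < M}) := by
          refine VitaliFamily.measure_le_of_frequently_le (Besicovitch.vitaliFamily μ) _ .rfl _ ?_
          rintro x ⟨-, hx⟩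
          replace hx :
            liminf (fun n => μ (closedBall x (r n)) / ρ (closedBall x (r n))) atTop < M := hx
          refine ((Besicovitch.tendsto_filterAt μ x).comp hr).frequently
            ((frequently_lt_of_liminf_lt (by isBoundedDefault) hx).mono fun n hn => ?_)
          simpa [mul_comm] using
            (ENNReal.div_le_iff_le_mul (Or.inr (ENNReal.natCast_ne_top M))
              (Or.inr (ne_bot_of_gt hn))).1 hn.le
      _ ≤ M * ρ N := by simpa using measure_mono (μ := (M : ℝ≥0) • ρ) inter_subset_left
      _ = 0 := by rw [hN, mul_zero]
  have hfinite : μ (N ∩ {x | lowerDensity μ ρ r x < ∞}) = 0 := by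
    refine measure_mono_null (fun x ⟨hxN, hx⟩ => ?_) (measure_iUnion_null hbounded)
    obtain ⟨M, hM⟩ := ENNReal.exists_nat_gt hx.ne
    exact mem_iUnion.2 ⟨M, hxN, hM⟩
  rwa [measure_inter_conull (mem_ae_iff.1 h)] at hfinite

theorem ae_lowerDensity_eq_rnDeriv (μ ρ : Measure β) [IsLocallyFiniteMeasure μ]
    [IsLocallyFiniteMeasure ρ] (hr : Tendsto r atTop (𝓝[>] 0)) :
    ∀ᵐ x ∂ρ, lowerDensity μ ρ r x = μ.rnDeriv ρ x :=
  (Besicovitch.ae_tendsto_rnDeriv μ ρ).mono fun _ hx => (hx.comp hr).liminf_eq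

theorem absolutelyContinuous_and_lintegral_rnDeriv_sq_eq {μ ρ : Measure β}
    [IsLocallyFiniteMeasure μ] [IsLocallyFiniteMeasure ρ] (hr : Tendsto r atTop (𝓝[>] 0))
    (h : ∫⁻ x, lowerDensity μ ρ r x ∂μ ≠ ∞) :
    μ ≪ ρ ∧ ∫⁻ x, μ.rnDeriv ρ x ^ 2 ∂ρ = ∫⁻ x, lowerDensity μ ρ r x ∂μ := by
  have hac : μ ≪ ρ := absolutelyContinuous_of_ae_lowerDensity_lt_top hr
    (ae_lt_top (measurable_lowerDensity μ ρ r) h)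
  refine ⟨hac, (lintegral_rnDeriv_sq hac).trans (lintegral_congr_ae ?_)⟩
  filter_upwards [hac.ae_le (ae_lowerDensity_eq_rnDeriv μ ρ hr)] with x hx using hx.symm

end LowerDensity

lemma lintegral_lowerDensity_volume_le (μ : Measure ℝ) [SFinite μ] (r : ℕ → ℝ) :
    ∫⁻ ξ, lowerDensity μ volume r ξ ∂μ ≤
      liminf (fun n => μ.prod μ {p | dist p.2 p.1 ≤ r n} / ENNReal.ofReal (2 * r n)) atTop := by
  simp only [lowerDensity, Real.volume_closedBall]
  refine (lintegral_liminf_le fun n =>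
    (measurable_measure_closedBall μ (r n)).div_const _).trans_eq ?_
  congr 1 with n
  simp_rw [div_eq_mul_inv]
  rw [lintegral_mul_const _ (measurable_measure_closedBall μ (r n)),
    Measure.prod_apply (measurableSet_le (by fun_prop) measurable_const)]
  rfl

noncomputable def planeProj (θ : ℝ) (z : ℂ) : ℝ :=
  (z * (starRingEnd ℂ) (Complex.exp (((θ + π/2 : ℝ) : ℂ) * Complex.I))).re

lemma planeProj_apply (θ : ℝ) (z : ℂ) : planeProj θ z = z.im * cos θ - z.re * sin θ := by
  simp only [planeProj, Complex.mul_re, Complex.conj_re, Complex.conj_im,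
    Complex.exp_ofReal_mul_I_re, Complex.exp_ofReal_mul_I_im, cos_add_pi_div_two,
    sin_add_pi_div_two]
  ring

lemma planeProj_sub (θ : ℝ) (x y : ℂ) : planeProj θ (x - y) = planeProj θ x - planeProj θ y := by
  simp only [planeProj_apply, Complex.sub_re, Complex.sub_im]
  ring

lemma planeProj_eq_norm_mul_sin (θ : ℝ) (z : ℂ) :
    planeProj θ z = ‖z‖ * sin (Complex.arg z - θ) := by
  rw [planeProj_apply, sin_sub]
  linear_combination -cos θ * Complex.norm_mul_sin_arg z + sin θ * Complex.norm_mul_cos_arg z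

lemma abs_sub_round_mul_pi_le (t : ℝ) : |t - round (t / π) * π| ≤ π / 2 * |sin t| := by
  set u := t - round (t / π) * π
  have hu : |u| ≤ π / 2 := by
    have : u = (t / π - round (t / π)) * π := by rw [sub_mul, div_mul_cancel₀ t pi_ne_zero]
    rw [this, abs_mul, abs_of_pos pi_pos]
    nlinarith [abs_sub_round (t / π), pi_pos]
  have hsin : |sin u| = |sin t| := by rw [sin_sub_int_mul_pi, abs_mul, abs_neg_one_zpow, one_mul]
  calc |u| = π / 2 * (2 / π * |u|) := by field_simp
    _ ≤ π / 2 * |sin t| := by gcongr; exact hsin ▸ mul_abs_le_abs_sin hu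

lemma volume_setOf_abs_sin_sub_le {α : ℝ} (hα : α ∈ Ioc (-π) π) (s : ℝ) :
    volume ({θ | |sin (α - θ)| ≤ s} ∩ Ico 0 π) ≤ ENNReal.ofReal (4 * π * s) := by
  have hcover : {θ | |sin (α - θ)| ≤ s} ∩ Ico 0 π ⊆
      ⋃ k ∈ Finset.Icc (-1 : ℤ) 2, closedBall (α + k * π) (π / 2 * s) := by
    rintro θ ⟨hθs, hθ₀, hθπ⟩
    have hround := abs_le.1 (abs_sub_round ((θ - α) / π))
    have hlo : -1 ≤ (θ - α) / π := by rw [le_div_iff₀ pi_pos]; linarith [hα.2]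
    have hhi : (θ - α) / π < 2 := by rw [div_lt_iff₀ pi_pos]; linarith [hα.1]
    have hk : round ((θ - α) / π) ∈ Finset.Icc (-1 : ℤ) 2 := by
      have h₁ : ((-2 : ℤ) : ℝ) < round ((θ - α) / π) := by push_cast; linarith
      have h₂ : (round ((θ - α) / π) : ℝ) < (3 : ℤ) := by push_cast; linarith
      norm_cast at h₁ h₂
      simp only [Finset.mem_Icc]
      omega
    refine mem_iUnion₂.2 ⟨_, hk, ?_⟩
    rw [mem_closedBall, Real.dist_eq, ← sub_sub]
    refine (abs_sub_round_mul_pi_le (θ - α)).trans ?_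
    rw [← neg_sub α θ, sin_neg, abs_neg]
    exact mul_le_mul_of_nonneg_left hθs (by positivity)
  calc volume ({θ | |sin (α - θ)| ≤ s} ∩ Ico 0 π)
      ≤ ∑ k ∈ Finset.Icc (-1 : ℤ) 2, volume (closedBall (α + k * π) (π / 2 * s)) :=
        (measure_mono hcover).trans (measure_biUnion_finset_le _ _)
    _ = ENNReal.ofReal (4 * π * s) := by
        rw [show 4 * π * s = 4 * (2 * (π / 2 * s)) by ring, ENNReal.ofReal_mul (by norm_num)]
        simp [Real.volume_closedBall, show (Finset.Icc (-1 : ℤ) 2).card = 4 from rfl]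

lemma volume_setOf_abs_planeProj_le (z : ℂ) {δ : ℝ} (hδ : 0 < δ) :
    volume ({θ | |planeProj θ z| ≤ δ} ∩ Ico 0 π) ≤ ENNReal.ofReal (4 * π * δ) * ‖z‖ₑ⁻¹ := by
  rcases eq_or_ne z 0 with rfl | hz
  · simp [ENNReal.mul_top, hδ, pi_pos]
  have hz : 0 < ‖z‖ := norm_pos_iff.2 hz
  have hset : {θ | |planeProj θ z| ≤ δ} = {θ | |sin (Complex.arg z - θ)| ≤ δ / ‖z‖} := by
    ext θ
    simp [planeProj_eq_norm_mul_sin, abs_mul, le_div_iff₀ hz, mul_comm]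
  rw [hset, ← ofReal_norm, ← ENNReal.ofReal_inv_of_pos hz, ← ENNReal.ofReal_mul (by positivity),
    mul_assoc, ← div_eq_mul_inv]
  exact volume_setOf_abs_sin_sub_le ⟨Complex.neg_pi_lt_arg z, Complex.arg_le_pi z⟩ _

section ClosePairs

variable (ν : Measure ℂ)

noncomputable def closePairsMass (θ δ : ℝ) : ℝ≥0∞ :=
  ν.prod ν {p | dist (planeProj θ p.2) (planeProj θ p.1) ≤ δ}

noncomputable def closePairsDensity (r : ℕ → ℝ) (θ : ℝ) : ℝ≥0∞ :=
  liminf (fun n => closePairsMass ν θ (r n) / ENNReal.ofReal (2 * r n)) atTop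

lemma measurableSet_setOf_dist_planeProj_le (δ : ℝ) :
    MeasurableSet {q : ℝ × ℂ × ℂ | dist (planeProj q.1 q.2.2) (planeProj q.1 q.2.1) ≤ δ} :=
  (isClosed_le (by simp only [planeProj_apply]; fun_prop) continuous_const).measurableSet

variable [SFinite ν]

lemma measurable_closePairsMass (δ : ℝ) : Measurable fun θ => closePairsMass ν θ δ :=
  measurable_measure_prodMk_left (measurableSet_setOf_dist_planeProj_le δ)

lemma setLIntegral_closePairsMass_le {δ : ℝ} (hδ : 0 < δ) :
    ∫⁻ θ in Ico 0 π, closePairsMass ν θ δ ≤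
      ENNReal.ofReal (4 * π * δ) * ∫⁻ x, ∫⁻ y, edist x y ^ (-(1:ℝ)) ∂ν ∂ν := by
  have hE := measurableSet_setOf_dist_planeProj_le δ
  have henergy : Measurable fun p : ℂ × ℂ => edist p.1 p.2 ^ (-(1:ℝ)) := by fun_prop
  calc ∫⁻ θ in Ico 0 π, closePairsMass ν θ δ
      = ∫⁻ p, volume.restrict (Ico 0 π) {θ | dist (planeProj θ p.2) (planeProj θ p.1) ≤ δ}
          ∂ν.prod ν :=
        (Measure.prod_apply hE).symm.trans (Measure.prod_apply_symm hE)
    _ ≤ ∫⁻ p, ENNReal.ofReal (4 * π * δ) * edist p.1 p.2 ^ (-(1:ℝ)) ∂ν.prod ν := by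
        refine lintegral_mono fun p => ?_
        rw [Measure.restrict_apply' measurableSet_Ico]
        simpa [Real.dist_eq, ← planeProj_sub, edist_comm p.1, edist_eq_enorm_sub,
          ENNReal.rpow_neg_one] using
          volume_setOf_abs_planeProj_le (p.2 - p.1) hδ
    _ = _ := by rw [lintegral_const_mul _ henergy, lintegral_prod _ henergy.aemeasurable]

lemma setLIntegral_closePairsDensity_le {r : ℕ → ℝ} (hr : ∀ n, 0 < r n) :
    ∫⁻ θ in Ico 0 π, closePairsDensity ν r θ ≤
      ENNReal.ofReal (2 * π) * ∫⁻ x, ∫⁻ y, edist x y ^ (-(1:ℝ)) ∂ν ∂ν := by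
  refine (lintegral_liminf_le fun n => (measurable_closePairsMass ν (r n)).div_const _).trans ?_
  refine (liminf_le_liminf (.of_forall fun n => ?_)).trans_eq (liminf_const _)
  simp_rw [div_eq_mul_inv]
  rw [lintegral_mul_const _ (measurable_closePairsMass ν _), ← div_eq_mul_inv]
  refine ENNReal.div_le_of_le_mul ((setLIntegral_closePairsMass_le ν (hr n)).trans_eq ?_)
  rw [show 4 * π * r n = 2 * π * (2 * r n) by ring, ENNReal.ofReal_mul (by positivity)]
  ring

lemma lintegral_lowerDensity_map_planeProj_le (r : ℕ → ℝ) (θ : ℝ) :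
    ∫⁻ ξ, lowerDensity (ν.map (planeProj θ)) volume r ξ ∂ν.map (planeProj θ) ≤
      closePairsDensity ν r θ := by
  have hP : Measurable (planeProj θ) := by
    rw [show planeProj θ = _ from funext (planeProj_apply θ)]; fun_prop
  refine (lintegral_lowerDensity_volume_le _ r).trans_eq ?_
  congr with n
  rw [Measure.map_prod_map _ _ hP hP, Measure.map_apply (hP.prodMap hP)
    (isClosed_le (continuous_snd.dist continuous_fst) continuous_const).measurableSet]
  rfl

end ClosePairs

/-- Marstrand's projection theorem in the plane, `L²` form: if a compactly supported
finite measure `ν₁` on `ℂ ≃ ℝ²` has finite `1`-energy, then for a.e. direction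
`θ ∈ [0,π)` the orthogonal projection of `ν₁` onto the line `ℝ·e^{i(θ+π/2)}` is
absolutely continuous, and the densities are square-integrable in `(θ, ξ)` with
`L²`-norm squared bounded by a universal constant times the `1`-energy. -/
theorem marstrand_projection_L2 :
    ∃ C : ℝ≥0∞, 0 < C ∧ C < ⊤ ∧
      ∀ ν₁ : Measure ℂ, IsFiniteMeasure ν₁ →
        (∃ K : Set ℂ, IsCompact K ∧ ν₁ Kᶜ = 0) →
        (∫⁻ x, ∫⁻ y, (edist x y) ^ (-(1:ℝ)) ∂ν₁ ∂ν₁) < ⊤ →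
        (∀ᵐ θ ∂(volume.restrict (Set.Ico (0:ℝ) π)),
          Measure.map
            (fun z : ℂ =>
              (z * (starRingEnd ℂ) (Complex.exp (((θ + π/2 : ℝ) : ℂ) * Complex.I))).re)
            ν₁ ≪ volume) ∧
        (∫⁻ θ in Set.Ico (0:ℝ) π, ∫⁻ ξ : ℝ,
            ((Measure.map
              (fun z : ℂ =>
                (z * (starRingEnd ℂ) (Complex.exp (((θ + π/2 : ℝ) : ℂ) * Complex.I))).re)
              ν₁).rnDeriv volume ξ) ^ 2 ∂volume ∂volume)
          ≤ C * ∫⁻ x, ∫⁻ y, (edist x y) ^ (-(1:ℝ)) ∂ν₁ ∂ν₁ := by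
  refine ⟨ENNReal.ofReal (2 * π), by simp [pi_pos], ENNReal.ofReal_lt_top, fun ν _ _ hI => ?_⟩
  set r : ℕ → ℝ := fun n => 1 / (n + 1)
  have hr_pos (n : ℕ) : 0 < r n := by positivity
  have hr : Tendsto r atTop (𝓝[>] 0) := tendsto_nhdsWithin_of_tendsto_nhds_of_eventually_within _
    tendsto_one_div_add_atTop_nhds_zero_nat (.of_forall hr_pos)
  have hbound := setLIntegral_closePairsDensity_le ν hr_pos
  have hfinite : ∀ᵐ θ ∂volume.restrict (Ico 0 π), closePairsDensity ν r θ < ∞ :=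
    ae_lt_top (.liminf fun n => (measurable_closePairsMass ν (r n)).div_const _)
      (ne_top_of_le_ne_top (ENNReal.mul_ne_top ENNReal.ofReal_ne_top hI.ne) hbound)
  have hproj : ∀ᵐ θ ∂volume.restrict (Ico 0 π), ν.map (planeProj θ) ≪ volume ∧
      ∫⁻ ξ, (ν.map (planeProj θ)).rnDeriv volume ξ ^ 2 =
        ∫⁻ ξ, lowerDensity (ν.map (planeProj θ)) volume r ξ ∂ν.map (planeProj θ) :=
    hfinite.mono fun θ hθ => absolutelyContinuous_and_lintegral_rnDeriv_sq_eq hr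
      (ne_top_of_le_ne_top hθ.ne (lintegral_lowerDensity_map_planeProj_le ν r θ))
  refine ⟨hproj.mono fun θ h => h.1, ?_⟩
  calc ∫⁻ θ in Ico 0 π, ∫⁻ ξ, (ν.map (planeProj θ)).rnDeriv volume ξ ^ 2
      = ∫⁻ θ in Ico 0 π, ∫⁻ ξ, lowerDensity (ν.map (planeProj θ)) volume r ξ
          ∂ν.map (planeProj θ) := lintegral_congr_ae (hproj.mono fun θ h => h.2)
    _ ≤ ∫⁻ θ in Ico 0 π, closePairsDensity ν r θ :=
        lintegral_mono (lintegral_lowerDensity_map_planeProj_le ν r)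
    _ ≤ _ := hbound
end
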